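/- Let W ∈ ℝ^{m×m} be symmetric, and suppose U_ℓ = Q Σ Rᵀ with Q ∈ ℝ^{m×k}, Qᵀ W Q = I_k, Σ ∈ ℝ^{k×k}, R ∈ ℝ^{ℓ×k}, Rᵀ R = I_k. Let u ∈ ℝ^m, e = u − Q Qᵀ W u, p = (eᵀ W e)^{1/2} > 0, ẽ = e/p, and let Y = [[Σ, Qᵀ W u],[0, p]] ∈ ℝ^{(k+1)×(k+1)}. Suppose Y = Q_Y Σ_Y R_Yᵀ is a full SVD of Y, i.e. Q_Y, R_Y ∈ ℝ^{(k+1)×(k+1)} with Q_Yᵀ Q_Y = I_{k+1} and R_Yᵀ R_Y = I_{k+1}, and Σ_Y diagonal with nonnegative entries. Then [U_ℓ | u] = ([Q | ẽ] Q_Y) Σ_Y ([[R,0],[0,1]] R_Y)ᵀ, the left factor satisfies ([Q | ẽ] Q_Y)ᵀ W ([Q | ẽ] Q_Y) = I_{k+1}, and the right factor satisfies ([[R,0],[0,1]] R_Y)ᵀ ([[R,0],[0,1]] R_Y) = I_{k+1}. -/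

import Mathlib

/-!
Since `Qᵀ W e = 0` and `‖e‖_W = p`, the columns of `[Q | ẽ]` are `W`-orthonormal, and
`u = Q (Qᵀ W u) + p ẽ` gives `[U | u] = [Q | ẽ] Y [[R, 0], [0, 1]]ᵀ`. Substituting the SVD of `Y`
and regrouping yields the factorization; multiplying a factor with orthonormal columns by an
orthogonal matrix keeps its columns orthonormal.
-/

open Matrix

noncomputable section

/-- `[A | b]`: the matrix obtained by appending the column `b` to the matrix `A`. -/
def appendCol {m n : Type*} (A : Matrix m n ℝ) (b : m → ℝ) :
    Matrix m (n ⊕ Fin 1) ℝ :=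
  Matrix.of fun i => Sum.elim (A i) fun _ => b i

namespace Matrix

variable {m n l : Type*}

lemma appendCol_eq_fromCols (A : Matrix m n ℝ) (b : m → ℝ) :
    appendCol A b = fromCols A (replicateCol (Fin 1) b) := rfl

lemma transpose_mul_mul_mul_eq_one [Fintype m] [Fintype n] [DecidableEq n]
    {X : Matrix m n ℝ} {W : Matrix m m ℝ} {V : Matrix n n ℝ}
    (hX : Xᵀ * W * X = 1) (hV : Vᵀ * V = 1) : (X * V)ᵀ * W * (X * V) = 1 := by
  calc (X * V)ᵀ * W * (X * V) = Vᵀ * (Xᵀ * W * X) * V := by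
        simp only [transpose_mul, Matrix.mul_assoc]
    _ = 1 := by rw [hX, Matrix.mul_one, hV]

lemma transpose_mul_mul_eq_one [Fintype m] [Fintype n] [DecidableEq n]
    {X : Matrix m n ℝ} {V : Matrix n n ℝ} (hX : Xᵀ * X = 1) (hV : Vᵀ * V = 1) :
    (X * V)ᵀ * (X * V) = 1 := by
  rw [transpose_mul, Matrix.mul_assoc, ← Matrix.mul_assoc Xᵀ, hX, Matrix.one_mul, hV]

lemma fromBlocks_transpose_mul_self_eq_one [Fintype l] [DecidableEq n] {R : Matrix l n ℝ}
    (hR : Rᵀ * R = 1) :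
    (fromBlocks R 0 0 1 : Matrix (l ⊕ Fin 1) (n ⊕ Fin 1) ℝ)ᵀ *
      (fromBlocks R 0 0 1 : Matrix (l ⊕ Fin 1) (n ⊕ Fin 1) ℝ) = 1 := by
  rw [fromBlocks_transpose, fromBlocks_multiply, ← fromBlocks_one]
  simp [hR]

lemma appendCol_transpose_mul_mul_appendCol_eq_one [Fintype m] [DecidableEq n] {W : Matrix m m ℝ}
    (hW : W.IsSymm) {Q : Matrix m n ℝ} {v : m → ℝ} (hQ : Qᵀ * W * Q = 1)
    (hQv : Qᵀ *ᵥ (W *ᵥ v) = 0) (hv : v ⬝ᵥ (W *ᵥ v) = 1) :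
    (appendCol Q v)ᵀ * W * appendCol Q v = (1 : Matrix (n ⊕ Fin 1) (n ⊕ Fin 1) ℝ) := by
  have hQWv : Qᵀ * W * replicateCol (Fin 1) v = 0 := by
    rw [Matrix.mul_assoc, ← replicateCol_mulVec, ← replicateCol_mulVec, hQv, replicateCol_zero]
  have hvQ : replicateRow (Fin 1) v * W * Q = 0 := by
    rw [← transpose_eq_zero, transpose_mul, transpose_mul, transpose_replicateRow, hW.eq,
      ← Matrix.mul_assoc, hQWv]
  have hvv : replicateRow (Fin 1) v * W * replicateCol (Fin 1) v = 1 := by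
    rw [Matrix.mul_assoc, ← replicateCol_mulVec, replicateRow_mul_replicateCol]
    ext i j
    simp [hv, Subsingleton.elim i j, one_apply]
  rw [appendCol_eq_fromCols, transpose_fromCols, transpose_replicateCol, fromRows_mul,
    fromRows_mul_fromCols, hQ, hQWv, hvQ, hvv, fromBlocks_one]

lemma appendCol_mul_fromBlocks_mul_transpose [Fintype n] (Q : Matrix m n ℝ) (v : m → ℝ)
    (S : Matrix n n ℝ) (R : Matrix l n ℝ) (c : n → ℝ) (p : ℝ) :
    appendCol Q v *
        (fromBlocks S (of fun i (_ : Fin 1) => c i) 0 (of fun _ _ => p) :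
          Matrix (n ⊕ Fin 1) (n ⊕ Fin 1) ℝ) *
        (fromBlocks R 0 0 1 : Matrix (l ⊕ Fin 1) (n ⊕ Fin 1) ℝ)ᵀ =
      appendCol (Q * S * Rᵀ) (Q *ᵥ c + p • v) := by
  have hc : (of fun i (_ : Fin 1) => c i) = replicateCol (Fin 1) c := rfl
  have hp : (of fun (_ : Fin 1) (_ : Fin 1) => p) = p • 1 := by
    ext i j
    simp [Subsingleton.elim i j]
  rw [hc, hp, appendCol_eq_fromCols, appendCol_eq_fromCols, fromBlocks_transpose,
    fromCols_mul_fromBlocks, fromCols_mul_fromBlocks]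
  simp [replicateCol_mulVec]

lemma transpose_mulVec_mulVec_sub_proj_eq_zero [Fintype m] [Fintype n] [DecidableEq n]
    {W : Matrix m m ℝ} {Q : Matrix m n ℝ} (hQ : Qᵀ * W * Q = 1) (u : m → ℝ) :
    Qᵀ *ᵥ (W *ᵥ (u - Q *ᵥ (Qᵀ *ᵥ (W *ᵥ u)))) = 0 := by
  rw [mulVec_sub, mulVec_sub, mulVec_mulVec, mulVec_mulVec, mulVec_mulVec, hQ, one_mulVec,
    sub_self]

lemma inv_smul_dotProduct_mulVec_inv_smul_eq_one [Fintype m] {W : Matrix m m ℝ} {e : m → ℝ}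
    {p : ℝ} (hp : p = √(e ⬝ᵥ (W *ᵥ e))) (hppos : 0 < p) :
    (p⁻¹ • e) ⬝ᵥ (W *ᵥ (p⁻¹ • e)) = 1 := by
  have hsq : e ⬝ᵥ (W *ᵥ e) = p ^ 2 := by
    rw [hp, Real.sq_sqrt (Real.sqrt_pos.mp (hp ▸ hppos)).le]
  rw [mulVec_smul, dotProduct_smul, smul_dotProduct, hsq, smul_eq_mul, smul_eq_mul]
  field_simp

end Matrix

theorem stmt1_general {m ℓ k : ℕ}
    (W : Matrix (Fin m) (Fin m) ℝ) (hW : W.IsSymm)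
    (U : Matrix (Fin m) (Fin ℓ) ℝ)
    (Q : Matrix (Fin m) (Fin k) ℝ)
    (S : Matrix (Fin k) (Fin k) ℝ)
    (R : Matrix (Fin ℓ) (Fin k) ℝ)
    (hU : U = Q * S * Rᵀ)
    (hQ : Qᵀ * W * Q = 1) (hR : Rᵀ * R = 1)
    (u e : Fin m → ℝ)
    (he : e = u - Q *ᵥ (Qᵀ *ᵥ (W *ᵥ u)))
    (p : ℝ) (hp : p = Real.sqrt (e ⬝ᵥ (W *ᵥ e))) (hppos : 0 < p)
    (etil : Fin m → ℝ) (hetil : etil = p⁻¹ • e)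
    (QY RY : Matrix (Fin k ⊕ Fin 1) (Fin k ⊕ Fin 1) ℝ)
    (μ : Fin k ⊕ Fin 1 → ℝ)
    (hQY : QYᵀ * QY = 1) (hRY : RYᵀ * RY = 1)
    (hSVD : fromBlocks S (Matrix.of fun i (_ : Fin 1) => (Qᵀ *ᵥ (W *ᵥ u)) i) 0
        (Matrix.of fun (_ : Fin 1) (_ : Fin 1) => p) = QY * diagonal μ * RYᵀ) :
    appendCol U u =
      (appendCol Q etil * QY) * diagonal μ *
        ((fromBlocks R 0 0 1 : Matrix (Fin ℓ ⊕ Fin 1) (Fin k ⊕ Fin 1) ℝ) * RY)ᵀ ∧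
    (appendCol Q etil * QY)ᵀ * W * (appendCol Q etil * QY) = 1 ∧
    ((fromBlocks R 0 0 1 : Matrix (Fin ℓ ⊕ Fin 1) (Fin k ⊕ Fin 1) ℝ) * RY)ᵀ *
        ((fromBlocks R 0 0 1 : Matrix (Fin ℓ ⊕ Fin 1) (Fin k ⊕ Fin 1) ℝ) * RY) = 1 := by
  have hQe : Qᵀ *ᵥ (W *ᵥ etil) = 0 := by
    rw [hetil, mulVec_smul, mulVec_smul, he, transpose_mulVec_mulVec_sub_proj_eq_zero hQ,
      smul_zero]
  have hee : etil ⬝ᵥ (W *ᵥ etil) = 1 :=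
    hetil ▸ inv_smul_dotProduct_mulVec_inv_smul_eq_one hp hppos
  have hu : u = Q *ᵥ (Qᵀ *ᵥ (W *ᵥ u)) + p • etil := by
    rw [hetil, smul_smul, mul_inv_cancel₀ hppos.ne', one_smul, he, add_sub_cancel]
  refine ⟨?_, transpose_mul_mul_mul_eq_one
    (appendCol_transpose_mul_mul_appendCol_eq_one hW hQ hQe hee) hQY, ?_⟩
  · rw [transpose_mul, ← Matrix.mul_assoc, Matrix.mul_assoc _ QY, Matrix.mul_assoc _ (QY * _),
      ← hSVD, appendCol_mul_fromBlocks_mul_transpose, ← hu, hU]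
  · exact transpose_mul_mul_eq_one (fromBlocks_transpose_mul_self_eq_one hR) hRY

theorem stmt1 {m ℓ k : ℕ}
    (W : Matrix (Fin m) (Fin m) ℝ) (hW : W.IsSymm)
    (U : Matrix (Fin m) (Fin ℓ) ℝ)
    (Q : Matrix (Fin m) (Fin k) ℝ)
    (S : Matrix (Fin k) (Fin k) ℝ)
    (R : Matrix (Fin ℓ) (Fin k) ℝ)
    (hU : U = Q * S * Rᵀ)
    (hQ : Qᵀ * W * Q = 1) (hR : Rᵀ * R = 1)
    (u e : Fin m → ℝ)
    (he : e = u - Q *ᵥ (Qᵀ *ᵥ (W *ᵥ u)))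
    (p : ℝ) (hp : p = Real.sqrt (e ⬝ᵥ (W *ᵥ e))) (hppos : 0 < p)
    (etil : Fin m → ℝ) (hetil : etil = p⁻¹ • e)
    (QY RY : Matrix (Fin k ⊕ Fin 1) (Fin k ⊕ Fin 1) ℝ)
    (μ : Fin k ⊕ Fin 1 → ℝ)
    (hQY : QYᵀ * QY = 1) (hRY : RYᵀ * RY = 1) (hμ : ∀ i, 0 ≤ μ i)
    (hSVD : fromBlocks S (Matrix.of fun i (_ : Fin 1) => (Qᵀ *ᵥ (W *ᵥ u)) i) 0
        (Matrix.of fun (_ : Fin 1) (_ : Fin 1) => p) = QY * diagonal μ * RYᵀ) :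
    appendCol U u =
      (appendCol Q etil * QY) * diagonal μ *
        ((fromBlocks R 0 0 1 : Matrix (Fin ℓ ⊕ Fin 1) (Fin k ⊕ Fin 1) ℝ) * RY)ᵀ ∧
    (appendCol Q etil * QY)ᵀ * W * (appendCol Q etil * QY) = 1 ∧
    ((fromBlocks R 0 0 1 : Matrix (Fin ℓ ⊕ Fin 1) (Fin k ⊕ Fin 1) ℝ) * RY)ᵀ *
        ((fromBlocks R 0 0 1 : Matrix (Fin ℓ ⊕ Fin 1) (Fin k ⊕ Fin 1) ℝ) * RY) = 1 :=
  stmt1_general W hW U Q S R hU hQ hR u e he p hp hppos etil hetil QY RY μ hQY hRY hSVD
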